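/- Let H be a Hopf algebra, A a left H-module algebra, δ a character and σ a grouplike element, and τ: A → k a linear functional that is a δ-invariant σ-trace, meaning τ(h(a)) = δ(h)τ(a) and τ(ab) = τ(b σ(a)) for all h ∈ H, a,b ∈ A. Then for all a₀, a₁ ∈ A and h ∈ H: τ(a₁ h(a₀)) = τ(a₀ S̃_δ(h)(σ(a₁))). -/

import Mathlib

open TensorProduct

/-- The `δ`-twisted antipode `S̃_δ(h) = δ(h⁽¹⁾) S(h⁽²⁾)` of a Hopf algebra. -/
noncomputable def twistedAntipode (k : Type*) {H : Type*} [Field k] [Ring H]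
    [HopfAlgebra k H] (δ : H →ₐ[k] k) : H →ₗ[k] H :=
  HopfAlgebra.antipode (R := k) ∘ₗ (TensorProduct.lid k H).toLinearMap ∘ₗ
    TensorProduct.map δ.toLinearMap LinearMap.id ∘ₗ Coalgebra.comul

/-- let `H` act on an algebra `A` as a module algebra, `δ` a character,
`σ` grouplike, and `τ : A → k` a `δ`-invariant `σ`-trace (`τ(h(a)) = δ(h)τ(a)` and
`τ(ab) = τ(b σ(a))`).  Then `τ(a₁ h(a₀)) = τ(a₀ S̃_δ(h)(σ(a₁)))`. -/
theorem trace_twisted_antipode_identity (k : Type*) {H A : Type*} [Field k] [Ring H]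
    [HopfAlgebra k H] [Ring A] [Algebra k A]
    (act : H →ₗ[k] A →ₗ[k] A)
    -- `A` is a left `H`-module:
    (hact1 : ∀ a : A, act (1 : H) a = a)
    (hactmul : ∀ (h g : H) (a : A), act (h * g) a = act h (act g a))
    -- `A` is an `H`-module algebra: `h(ab) = h⁽¹⁾(a) h⁽²⁾(b)` and `h(1) = ε(h)1`:
    (hma : ∀ (h : H) (a b : A) (n : ℕ) (h₁ h₂ : Fin n → H),
      Coalgebra.comul (R := k) h = ∑ i, h₁ i ⊗ₜ[k] h₂ i →
      act h (a * b) = ∑ i, act (h₁ i) a * act (h₂ i) b)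
    (hmaone : ∀ h : H, act h (1 : A) = Coalgebra.counit (R := k) h • (1 : A))
    (δ : H →ₐ[k] k) (σ : H)
    (hσ_comul : Coalgebra.comul (R := k) σ = σ ⊗ₜ[k] σ)
    (hσ_counit : Coalgebra.counit (R := k) σ = (1 : k))
    (τ : A →ₗ[k] k)
    (hδinv : ∀ (h : H) (a : A), τ (act h a) = δ h • τ a)
    (hσtrace : ∀ a b : A, τ (a * b) = τ (b * act σ a)) :
    ∀ (a₀ a₁ : A) (h : H),
      τ (a₁ * act h a₀) = τ (a₀ * act (twistedAntipode k δ h) (act σ a₁)) := by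
  classical
  -- module algebra property with arbitrary `Coalgebra.Repr` decomposition
  have hma' : ∀ (h : H) (a b : A) (r : Coalgebra.Repr k h (H × H)),
      act h (a * b) = ∑ i ∈ r.index, act (r.left i) a * act (r.right i) b := by
    intro h a b r
    have hcomul : Coalgebra.comul (R := k) h
        = ∑ j : Fin r.index.card,
            r.left (r.index.equivFin.symm j : _) ⊗ₜ[k] r.right (r.index.equivFin.symm j : _) := by
      rw [← r.eq, ← Finset.sum_coe_sort r.index (fun i => r.left i ⊗ₜ[k] r.right i),
        ← Equiv.sum_comp r.index.equivFin.symm]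
    rw [hma h a b _ _ _ hcomul,
      Equiv.sum_comp r.index.equivFin.symm
        (fun i : r.index => act (r.left i) a * act (r.right i) b),
      Finset.sum_coe_sort r.index (fun i => act (r.left i) a * act (r.right i) b)]
  -- evaluation of the twisted antipode on a representation
  have htA : ∀ (h : H) (r : Coalgebra.Repr k h (H × H)),
      twistedAntipode k δ h
        = ∑ i ∈ r.index, δ (r.left i) • HopfAlgebra.antipode (R := k) (r.right i) := by
    intro h r
    simp only [twistedAntipode, LinearMap.comp_apply]
    rw [show Coalgebra.comul (R := k) h = ∑ i ∈ r.index, r.left i ⊗ₜ[k] r.right i from r.eq.symm]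
    simp [map_sum, TensorProduct.lid_tmul]
  -- the key identity: τ(h(a)·b) = τ(a·S̃_δ(h)(b))
  have key : ∀ (a b : A) (h : H),
      τ (act h a * b) = τ (a * act (twistedAntipode k δ h) b) := by
    intro a b h
    set S : H →ₗ[k] H := HopfAlgebra.antipode (R := k) with hS
    let r : Coalgebra.Repr k h (H × H) := Coalgebra.Repr.arbitrary k h
    let r₁ : ∀ i : r.ι, Coalgebra.Repr k (r.left i) (H × H) := fun i => Coalgebra.Repr.arbitrary k _
    let r₂ : ∀ i : r.ι, Coalgebra.Repr k (r.right i) (H × H) := fun i => Coalgebra.Repr.arbitrary k _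
    -- the trilinear evaluation map
    let mapB : H ⊗[k] H →ₗ[k] A :=
      (act.flip b) ∘ₗ LinearMap.mul' k H ∘ₗ S.lTensor H
    let Φ : H ⊗[k] (H ⊗[k] H) →ₗ[k] A :=
      TensorProduct.lift (((LinearMap.mul k A) ∘ₗ (act.flip a)).compl₂ mapB)
    have hΦ : ∀ u v w : H, Φ (u ⊗ₜ[k] (v ⊗ₜ[k] w)) = act u a * act (v * S w) b := by
      intro u v w
      simp [Φ, mapB]
    have coasΦ := congrArg Φ (Coalgebra.sum_tmul_tmul_eq r r₁ r₂)
    simp only [map_sum] at coasΦ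
    -- counit identity: h = ∑ ε(h⁽²⁾) • h⁽¹⁾
    have hcounit : ∑ i ∈ r.index, Coalgebra.counit (R := k) (r.right i) • r.left i = h := by
      have := congrArg (TensorProduct.rid k H) (Coalgebra.sum_tmul_counit_eq r)
      simpa only [map_sum, TensorProduct.rid_tmul, one_smul] using this
    -- the Sweedler computation: ∑ h⁽¹⁾(a · S(h⁽²⁾)(b)) = h(a)·b
    have hT : ∑ i ∈ r.index, act (r.left i) (a * act (S (r.right i)) b) = act h a * b := by
      calc ∑ i ∈ r.index, act (r.left i) (a * act (S (r.right i)) b)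
          = ∑ i ∈ r.index, ∑ j ∈ (r₁ i).index,
              act ((r₁ i).left j) a * act ((r₁ i).right j) (act (S (r.right i)) b) := by
            exact Finset.sum_congr rfl fun i _ => hma' _ _ _ (r₁ i)
        _ = ∑ i ∈ r.index, ∑ j ∈ (r₁ i).index,
              Φ ((r₁ i).left j ⊗ₜ[k] ((r₁ i).right j ⊗ₜ[k] r.right i)) := by
            simp only [hΦ, hactmul]
        _ = ∑ i ∈ r.index, ∑ j ∈ (r₂ i).index,
              Φ (r.left i ⊗ₜ[k] ((r₂ i).left j ⊗ₜ[k] (r₂ i).right j)) := coasΦ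
        _ = ∑ i ∈ r.index,
              act (r.left i) a * act (∑ j ∈ (r₂ i).index,
                (r₂ i).left j * S ((r₂ i).right j)) b := by
            simp only [hΦ, map_sum, LinearMap.sum_apply, Finset.mul_sum]
        _ = ∑ i ∈ r.index,
              Coalgebra.counit (R := k) (r.right i) • (act (r.left i) a * b) := by
            refine Finset.sum_congr rfl fun i _ => ?_
            rw [hS, HopfAlgebra.sum_mul_antipode_eq_smul (r₂ i)]
            simp [hact1, mul_smul_comm]
        _ = act h a * b := by
            have hha := congrArg (fun x : H => act x a) hcounit
            simp only [map_sum, LinearMap.sum_apply, map_smul, LinearMap.smul_apply] at hha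
            rw [← hha, Finset.sum_mul]
            simp [smul_mul_assoc]
    calc τ (act h a * b)
        = ∑ i ∈ r.index, τ (act (r.left i) (a * act (S (r.right i)) b)) := by
          rw [← map_sum, hT]
      _ = ∑ i ∈ r.index, δ (r.left i) • τ (a * act (S (r.right i)) b) := by
          simp only [hδinv]
      _ = τ (a * act (twistedAntipode k δ h) b) := by
          rw [htA h r]
          simp [map_sum, Finset.mul_sum, mul_smul_comm]
  intro a₀ a₁ h
  rw [hσtrace a₁ (act h a₀), key a₀ (act σ a₁) h]
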